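/- Suppose the machine M is FTA-compliant with the Starlight architectural specification (SL, C_SL), i.e., FTA-compliant with (SL, ℐ) for some interpretation ℐ ∈ C_SL. If π(p) is a proposition that is toggle-High dependent at α, then M,π,α ⊨ ¬K_L p. -/

import Mathlib

structure Machine (S A D O : Type) where
  s0 : S
  step : S → A → S
  dom : A → D
  obs : D → S → O

namespace Machine

def run {S A D O : Type} (M : Machine S A D O) (α : List A) : S :=
  α.foldl M.step M.s0

end Machine
/-- Elements of a view: actions or (group) observations. -/
inductive VE (A O' : Type) where
  | act : A → VE A O'
  | obs : O' → VE A O'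

open Classical in
/-- Absorptive concatenation: `σ ∘ x` is `σ` if `x` equals the last element of `σ`,
and `σ ++ [x]` otherwise. -/
noncomputable def absorb {X : Type} (σ : List X) (x : X) : List X :=
  if σ.getLast? = some x then σ else σ ++ [x]

open Classical in
/-- View of a group `G`, computed on the reversed action sequence. -/
noncomputable def viewR {S A D O : Type} (M : Machine S A D O) (G : Set D) :
    List A → List (VE A (G → O))
  | [] => [VE.obs (fun u : G => M.obs u.1 M.s0)]
  | a :: ρ =>
    let o : VE A (G → O) := VE.obs (fun u : G => M.obs u.1 (M.run ((a :: ρ).reverse)))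
    if M.dom a ∈ G then viewR M G ρ ++ [VE.act a, o] else absorb (viewR M G ρ) o

/-- The view of group `G` of the action sequence `α`. -/
noncomputable def view {S A D O : Type} (M : Machine S A D O) (G : Set D) (α : List A) :
    List (VE A (G → O)) :=
  viewR M G α.reverse
/-- Formulas of the epistemic logic (without distributed knowledge). -/
inductive Formula (PC D : Type) where
  | tru : Formula PC D
  | atom : PC → Formula PC D
  | neg : Formula PC D → Formula PC D
  | conj : Formula PC D → Formula PC D → Formula PC D
  | know : Set D → Formula PC D → Formula PC D

/-- Satisfaction relation `M,π,α ⊨ φ`. -/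
def sat {S A D O PC : Type} (M : Machine S A D O) (π : PC → Set (List A)) :
    List A → Formula PC D → Prop
  | _, .tru => True
  | α, .atom p => α ∈ π p
  | α, .neg φ => ¬ sat M π α φ
  | α, .conj φ ψ => sat M π α φ ∧ sat M π α ψ
  | α, .know G φ => ∀ α', view M G α' = view M G α → sat M π α' φ
/-- An extended architecture: `edge u v = none` means no edge, `edge u v = some none`
means an edge labelled `⊤`, and `edge u v = some (some f)` means an edge labelled by
the filter-function name `f`.  There is at most one label per ordered pair by
construction, and the relation is reflexive with label `⊤`. -/
structure ExtArch (D L : Type) where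
  edge : D → D → Option (Option L)
  refl : ∀ u, edge u u = some none

/-- Values of the `tf` function and of filter-function interpretations:
`eps` is the empty value ε, `base v` an arbitrary basic value, and
`pair σ a` the pair `(σ, a)` of a `tf` value and an action. -/
inductive TFVal (A V : Type) where
  | eps : TFVal A V
  | base : V → TFVal A V
  | pair : List (TFVal A V) → A → TFVal A V

/-- `σ ⌢ x`: appends `x` as a single new last element unless `x = ε`. -/
def snoc' {A V : Type} (σ : List (TFVal A V)) : TFVal A V → List (TFVal A V)
  | .eps => σ
  | x => σ ++ [x]

/-- `tf`, computed on the reversed action sequence. -/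
def tfR {A D L V : Type} (Arch : ExtArch D L) (dm : A → D)
    (I : L → List A → A → TFVal A V) : List A → D → List (TFVal A V)
  | [], _ => []
  | a :: ρ, u =>
    match Arch.edge (dm a) u with
    | none => tfR Arch dm I ρ u
    | some none => tfR Arch dm I ρ u ++ [TFVal.pair (tfR Arch dm I ρ (dm a)) a]
    | some (some f) => snoc' (tfR Arch dm I ρ u) (I f ρ.reverse a)

/-- `tf Arch dm I α u` : maximal information domain `u` is permitted to have after `α`. -/
def tf {A D L V : Type} (Arch : ExtArch D L) (dm : A → D)
    (I : L → List A → A → TFVal A V) (α : List A) (u : D) : List (TFVal A V) :=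
  tfR Arch dm I α.reverse u

/-- `inF Arch dm I α a u` : the information `in_{dom(a),u}(α, a)` transmitted to `u`
when action `a` is performed after `α`. -/
def inF {A D L V : Type} (Arch : ExtArch D L) (dm : A → D)
    (I : L → List A → A → TFVal A V) (α : List A) (a : A) (u : D) : TFVal A V :=
  match Arch.edge (dm a) u with
  | none => TFVal.eps
  | some none => TFVal.pair (tf Arch dm I α (dm a)) a
  | some (some f) => I f α a
/-- FTA-compliance of a machine with an interpreted extended architecture
(whose actions, domains and domain function are those of the machine). -/
def FTACompliant {S A D O L V : Type} (M : Machine S A D O) (Arch : ExtArch D L)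
    (I : L → List A → A → TFVal A V) : Prop :=
  ∀ (u : D) (α α' : List A), tf Arch M.dom I α u = tf Arch M.dom I α' u →
    M.obs u (M.run α) = M.obs u (M.run α')

/-- The three domains of the Starlight architecture `SL`. -/
inductive SLDom where
  | H : SLDom
  | L : SLDom
  | S : SLDom
deriving DecidableEq

/-- The Starlight extended architecture: reflexive `⊤`-edges, `L ↝_⊤ H`,
`S ↝_⊤ H` and `S ↝_sf L` (the label set is `Unit`, with `()` standing for `sf`). -/
def SLArch : ExtArch SLDom Unit where
  edge u v :=
    match u, v with
    | .H, .H => some none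
    | .L, .L => some none
    | .S, .S => some none
    | .L, .H => some none
    | .S, .H => some none
    | .S, .L => some (some ())
    | _, _ => none
  refl u := by cases u <;> rfl

open Classical in
/-- The number of occurrences of the toggle action `t` in `α`. -/
noncomputable def countT {A : Type} (t : A) (α : List A) : ℕ :=
  (α.filter (fun a => decide (a = t))).length

open Classical in
/-- `togL dm t α`: with `α = α₀ t α₁ t … t αₙ` the canonical form (each `αᵢ`
containing no `t`), this is `(α₀↾{L}) t (α₁↾{L,S}) t (α₂↾{L}) t … t (αₙ↾Hₙ)`,
where `Hₙ = {L}` for even `n` and `Hₙ = {L,S}` for odd `n`; computed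
element-wise with a counter of the `t`s seen so far. -/
noncomputable def togL {A : Type} (dm : A → SLDom) (t : A) (α : List A) : List A :=
  (α.foldl (fun (st : ℕ × List A) a =>
    if a = t then (st.1 + 1, st.2 ++ [a])
    else if dm a = SLDom.L ∨ (dm a = SLDom.S ∧ Odd st.1) then (st.1, st.2 ++ [a])
    else st) (0, ([] : List A))).2

open Classical in
/-- Membership in the Starlight architectural specification `C_SL`, with
distinguished toggle action `t`: the filter function `sf` passes the action
itself (encoded as `TFVal.base a`) exactly when `a = t` or an odd number of
toggles has occurred and `a` is an `S` action; otherwise it passes `ε`. -/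
def memCSL {A : Type} (dm : A → SLDom) (t : A)
    (I : Unit → List A → A → TFVal A A) : Prop :=
  dm t = SLDom.S ∧
    ∀ (α : List A) (a : A),
      I () α a =
        if a = t ∨ (Odd (countT t α) ∧ dm a = SLDom.S) then TFVal.base a
        else TFVal.eps

/-!
Purging from `α` every action that `L` may not learn about (all `H` actions, and the `S`
actions other than `t` performed after an even number of toggles) yields `togL α`. Such a
purge changes neither the number of toggles nor `tf_L`, so by FTA-compliance every prefix of
`togL α` gives `L` the same observation as the corresponding prefix of `α`; as the purged
actions are not `L`'s, `L`'s view of `togL α` is its view of `α`. Hence `α` and any `β` with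
`togL α = togL β` are indistinguishable to `L`, and `L` cannot know a proposition that
separates them.
-/

section View

open Classical

variable {S A D O : Type} (M : Machine S A D O) (G : Set D)

lemma view_snoc (γ : List A) (a : A) :
    view M G (γ ++ [a]) =
      if M.dom a ∈ G then
        view M G γ ++ [VE.act a, VE.obs (fun u : G => M.obs u.1 (M.run (γ ++ [a])))]
      else absorb (view M G γ) (VE.obs (fun u : G => M.obs u.1 (M.run (γ ++ [a])))) := by
  rw [view, List.reverse_append, List.reverse_singleton, List.singleton_append, viewR,
    List.reverse_cons, List.reverse_reverse, view]

lemma getLast?_view (γ : List A) :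
    (view M G γ).getLast? = some (VE.obs (fun u : G => M.obs u.1 (M.run γ))) := by
  induction γ using List.reverseRecOn with
  | nil => rfl
  | append_singleton γ a ih =>
    rw [view_snoc]
    split_ifs
    · simp
    · unfold absorb
      split_ifs with h
      · exact h
      · simp

lemma view_purge_eq (f : List A → List A) (hnil : f [] = [])
    (hsnoc : ∀ γ a, f (γ ++ [a]) = f γ ++ [a] ∨ (f (γ ++ [a]) = f γ ∧ M.dom a ∉ G))
    (hobs : ∀ γ, ∀ u ∈ G, M.obs u (M.run (f γ)) = M.obs u (M.run γ)) (γ : List A) :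
    view M G (f γ) = view M G γ := by
  induction γ using List.reverseRecOn with
  | nil => rw [hnil]
  | append_singleton γ a ih =>
    have hobs' : (fun u : G => M.obs u.1 (M.run (f (γ ++ [a])))) =
        fun u : G => M.obs u.1 (M.run (γ ++ [a])) :=
      funext fun u => hobs _ u.1 u.2
    rcases hsnoc γ a with hkeep | ⟨hdrop, ha⟩
    · rw [hkeep] at hobs' ⊢
      rw [view_snoc, view_snoc, ih, hobs']
    · have hstay : (fun u : G => M.obs u.1 (M.run (γ ++ [a]))) =
          fun u : G => M.obs u.1 (M.run γ) :=
        funext fun u => by rw [← hobs _ u.1 u.2, hdrop, hobs _ u.1 u.2]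
      rw [hdrop, ih, view_snoc, if_neg ha, hstay, absorb, if_pos (getLast?_view M G γ)]

end View

lemma tf_snoc {A D L V : Type} (Arch : ExtArch D L) (dm : A → D)
    (I : L → List A → A → TFVal A V) (γ : List A) (a : A) (u : D) :
    tf Arch dm I (γ ++ [a]) u =
      match Arch.edge (dm a) u with
      | none => tf Arch dm I γ u
      | some none => tf Arch dm I γ u ++ [TFVal.pair (tf Arch dm I γ (dm a)) a]
      | some (some f) => snoc' (tf Arch dm I γ u) (I f γ a) := by
  simp only [tf, List.reverse_append, List.reverse_singleton, List.singleton_append, tfR,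
    List.reverse_reverse]

section Toggle

open Classical

variable {A : Type} (dm : A → SLDom) (t : A)

lemma countT_snoc (γ : List A) (a : A) :
    countT t (γ ++ [a]) = countT t γ + if a = t then 1 else 0 := by
  by_cases h : a = t <;> simp [countT, h]

/-- `n` is the number of toggles preceding `a`. -/
def TogKeeps (n : ℕ) (a : A) : Prop :=
  a = t ∨ dm a = SLDom.L ∨ (dm a = SLDom.S ∧ Odd n)

noncomputable def togStep (st : ℕ × List A) (a : A) : ℕ × List A :=
  if a = t then (st.1 + 1, st.2 ++ [a])
  else if dm a = SLDom.L ∨ (dm a = SLDom.S ∧ Odd st.1) then (st.1, st.2 ++ [a])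
  else st

lemma fst_foldl_togStep (γ : List A) : (γ.foldl (togStep dm t) (0, [])).1 = countT t γ := by
  induction γ using List.reverseRecOn with
  | nil => rfl
  | append_singleton γ a ih =>
    rw [List.foldl_append, List.foldl_cons, List.foldl_nil, countT_snoc, ← ih, togStep]
    split_ifs <;> rfl

lemma togL_snoc (γ : List A) (a : A) :
    togL dm t (γ ++ [a]) =
      if TogKeeps dm t (countT t γ) a then togL dm t γ ++ [a] else togL dm t γ := by
  change (List.foldl (togStep dm t) _ (γ ++ [a])).2 = _
  rw [List.foldl_append, List.foldl_cons, List.foldl_nil, togStep, fst_foldl_togStep, TogKeeps]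
  by_cases hat : a = t
  · simp only [hat, if_true, true_or]
    rfl
  · simp only [hat, if_false, false_or]
    split_ifs <;> rfl

lemma countT_togL (γ : List A) : countT t (togL dm t γ) = countT t γ := by
  induction γ using List.reverseRecOn with
  | nil => rfl
  | append_singleton γ a ih =>
    rw [togL_snoc]
    split_ifs with hk
    · rw [countT_snoc, countT_snoc, ih]
    · have hat : a ≠ t := fun h => hk (Or.inl h)
      rw [ih, countT_snoc, if_neg hat, add_zero]

end Toggle

section Starlight

variable {A : Type} {dm : A → SLDom} {t : A} {I : Unit → List A → A → TFVal A A}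

lemma memCSL.apply_eq_of_countT_eq (hI : memCSL dm t I) {α β : List A}
    (h : countT t α = countT t β) (a : A) : I () α a = I () β a := by
  rw [hI.2, hI.2, h]

lemma TogKeeps.dom_ne_H {n : ℕ} {a : A} (h : TogKeeps dm t n a) (ht : dm t = SLDom.S) :
    dm a ≠ SLDom.H := by
  rcases h with rfl | h | ⟨h, -⟩ <;> simp [*]

lemma tf_togL_L (hI : memCSL dm t I) (γ : List A) :
    tf SLArch dm I (togL dm t γ) SLDom.L = tf SLArch dm I γ SLDom.L := by
  induction γ using List.reverseRecOn with
  | nil => rfl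
  | append_singleton γ a ih =>
    rw [togL_snoc]
    cases hdom : dm a with
    | H =>
      have hdrop : ¬TogKeeps dm t (countT t γ) a := fun h => h.dom_ne_H hI.1 hdom
      rw [if_neg hdrop, tf_snoc, hdom, ih]
      rfl
    | L =>
      have hkeep : TogKeeps dm t (countT t γ) a := Or.inr (Or.inl hdom)
      rw [if_pos hkeep, tf_snoc, tf_snoc, hdom]
      simp only [ih]
      rfl
    | S =>
      by_cases hk : TogKeeps dm t (countT t γ) a
      · rw [if_pos hk, tf_snoc, tf_snoc, hdom]
        simp only [ih, hI.apply_eq_of_countT_eq (countT_togL dm t γ)]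
        rfl
      · have hsilent : I () γ a = TFVal.eps := by
          rw [hI.2, if_neg]
          rintro (hat | ⟨hodd, -⟩)
          exacts [hk (Or.inl hat), hk (Or.inr (Or.inr ⟨hdom, hodd⟩))]
        rw [if_neg hk, tf_snoc, hdom, ih]
        simp only [hsilent]
        rfl

lemma view_togL_L {S O : Type} {M : Machine S A SLDom O} (hI : memCSL M.dom t I)
    (hFTA : FTACompliant M SLArch I) (γ : List A) :
    view M {SLDom.L} (togL M.dom t γ) = view M {SLDom.L} γ := by
  refine view_purge_eq M {SLDom.L} (togL M.dom t) rfl (fun γ a => ?_) (fun γ u hu => ?_) γ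
  · rw [togL_snoc]
    split_ifs with hk
    · exact Or.inl rfl
    · exact Or.inr ⟨rfl, fun h => hk (Or.inr (Or.inl h))⟩
  · rw [hu]
    exact hFTA SLDom.L _ _ (tf_togL_L hI γ)

end Starlight

/-- if `M` is FTA-compliant with `(SL, C_SL)` and `π(p)` is
toggle-High dependent at `α`, then `M,π,α ⊨ ¬K_L p`. -/
theorem statement8 {S A O PC : Type} (M : Machine S A SLDom O) (t : A)
    (I : Unit → List A → A → TFVal A A) (hI : memCSL M.dom t I)
    (hFTA : FTACompliant M SLArch I)
    (π : PC → Set (List A)) (p : PC) (α : List A)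
    (hdep : ∃ β : List A, togL M.dom t α = togL M.dom t β ∧ (α ∈ π p ↔ β ∉ π p)) :
    sat M π α (Formula.neg (Formula.know {SLDom.L} (Formula.atom p))) := by
  obtain ⟨β, htog, hsep⟩ := hdep
  intro hK
  have hview : view M {SLDom.L} β = view M {SLDom.L} α := by
    rw [← view_togL_L hI hFTA α, htog, view_togL_L hI hFTA β]
  exact hsep.mp (hK α rfl) (hK β hview)
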